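/- arXiv:math/0503572 — 2 statements merged into one kernel-verified Lean document; each statement's English description precedes it below -/
import Mathlib

section
/- For every ε > 0 there exists δ > 0 with the following property. Let V1, V2, V3 be finite non-empty sets and let E12 ⊆ V1 × V2, E23 ⊆ V2 × V3, E31 ⊆ V3 × V1. If the number of triples (x1, x2, x3) ∈ V1 × V2 × V3 with (x1, x2) ∈ E12, (x2, x3) ∈ E23 and (x3, x1) ∈ E31 is at most δ|V1||V2||V3|, then there exist sets E'12 ⊆ V1 × V2, E'23 ⊆ V2 × V3, E'31 ⊆ V3 × V1 such that no triple (x1, x2, x3) satisfies (x1, x2) ∈ E'12, (x2, x3) ∈ E'23 and (x3, x1) ∈ E'31, and such that |E_ij \ E'_ij| ≤ ε|V_i||V_j| for each ij = 12, 23, 31. -/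
/-!
Blow each vertex of `V1` up into `|V2||V3|` copies, each vertex of `V2` into `|V3||V1|` copies
and each vertex of `V3` into `|V1||V2|` copies. The three parts of the blown-up tripartite graph
all have size `N = |V1||V2||V3|`, each triangle of the original graph has `N²` copies and each edge of `Eij`
has `N² / (|Vi||Vj|)` copies. So the blow-up has at most `δN³` triangles, and the ordinary triangle
removal lemma (with `ε / 27` on its `3N` vertices) makes it triangle-free by deleting fewer than
`εN² / 3` edges. Keep an original edge when fewer than a third of its copies were deleted: a
triangle of kept edges then has a copy none of whose three edges was deleted, and each edge of `Eij`
that is not kept accounts for at least `N² / (3|Vi||Vj|)` deleted edges.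
-/

open Finset Function Sum3

lemma Finset.card_filter_le_card_mul_of_injective {T P R : Type*} [Fintype T] [Fintype R]
    [DecidableEq P] (D : Finset P) (f : T → P × R) (hf : Injective f) :
    #{x | (f x).1 ∈ D} ≤ #D * Fintype.card R := by
  rw [← card_univ, ← card_product]
  exact card_le_card_of_injOn f (fun x hx => by simpa using hx) hf.injOn

lemma exists_triple_not_mem_of_three_mul_card_lt {X Y Z : Type*} [Fintype X] [Fintype Y] [Fintype Z]
    (D₀₁ : Finset (X × Y)) (D₁₂ : Finset (Y × Z)) (D₂₀ : Finset (Z × X))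
    (h₀₁ : 3 * #D₀₁ < Fintype.card X * Fintype.card Y)
    (h₁₂ : 3 * #D₁₂ < Fintype.card Y * Fintype.card Z)
    (h₂₀ : 3 * #D₂₀ < Fintype.card Z * Fintype.card X) :
    ∃ u v w, (u, v) ∉ D₀₁ ∧ (v, w) ∉ D₁₂ ∧ (w, u) ∉ D₂₀ := by
  classical
  by_contra! h
  have hcover : univ ⊆
      univ.filter (fun x : X × Y × Z => (x.1, x.2.1) ∈ D₀₁) ∪
        univ.filter (fun x : X × Y × Z => (x.2.1, x.2.2) ∈ D₁₂) ∪
        univ.filter (fun x : X × Y × Z => (x.2.2, x.1) ∈ D₂₀) := by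
    rintro ⟨u, v, w⟩ -
    simp only [mem_union, mem_filter, mem_univ, true_and]
    tauto
  have h₀₁' := card_filter_le_card_mul_of_injective D₀₁ (fun x : X × Y × Z => ((x.1, x.2.1), x.2.2))
    (fun x y h => by simp_all [Prod.ext_iff])
  have h₁₂' := card_filter_le_card_mul_of_injective D₁₂ (fun x : X × Y × Z => ((x.2.1, x.2.2), x.1))
    (fun x y h => by simp_all [Prod.ext_iff])
  have h₂₀' := card_filter_le_card_mul_of_injective D₂₀ (fun x : X × Y × Z => ((x.2.2, x.1), x.2.1))
    (fun x y h => by simp_all [Prod.ext_iff])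
  have hcard := (card_le_card hcover).trans ((card_union_le _ _).trans
    (Nat.add_le_add_right (card_union_le _ _) _))
  simp only [card_univ, Fintype.card_prod] at hcard
  have hX : 0 < Fintype.card X := Nat.pos_of_mul_pos_left (h₂₀.trans_le' (Nat.zero_le _))
  have hY : 0 < Fintype.card Y := Nat.pos_of_mul_pos_left (h₀₁.trans_le' (Nat.zero_le _))
  have hZ : 0 < Fintype.card Z := Nat.pos_of_mul_pos_left (h₁₂.trans_le' (Nat.zero_le _))
  nlinarith [Nat.mul_lt_mul_of_pos_right h₀₁ hZ, Nat.mul_lt_mul_of_pos_right h₁₂ hX,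
    Nat.mul_lt_mul_of_pos_right h₂₀ hY]

lemma Finset.card_filter_le_mul_sum {ι : Type*} (s : Finset ι) (f : ι → ℕ) (c k : ℕ) :
    #{e ∈ s | k ≤ c * f e} * k ≤ c * ∑ e ∈ s, f e :=
  calc #{e ∈ s | k ≤ c * f e} * k = ∑ e ∈ s with k ≤ c * f e, k := by rw [sum_const, smul_eq_mul]
    _ ≤ ∑ e ∈ s with k ≤ c * f e, c * f e := sum_le_sum fun e he => (mem_filter.1 he).2
    _ ≤ ∑ e ∈ s, c * f e := sum_le_sum_of_subset (filter_subset _ _)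
    _ = c * ∑ e ∈ s, f e := (mul_sum _ _ _).symm

namespace SimpleGraph

variable {α β γ X Y Z V : Type*}

def tripartite (r₀₁ : α → β → Prop) (r₁₂ : β → γ → Prop) (r₂₀ : γ → α → Prop) :
    SimpleGraph (α ⊕ β ⊕ γ) where
  Adj
    | in₀ a, in₁ b | in₁ b, in₀ a => r₀₁ a b
    | in₁ b, in₂ c | in₂ c, in₁ b => r₁₂ b c
    | in₂ c, in₀ a | in₀ a, in₂ c => r₂₀ c a
    | _, _ => False
  symm := ⟨by rintro (_ | _ | _) (_ | _ | _) h <;> exact h⟩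
  loopless := ⟨by rintro (_ | _ | _) h <;> exact h⟩

variable {r₀₁ : α → β → Prop} {r₁₂ : β → γ → Prop} {r₂₀ : γ → α → Prop}
  {a a' : α} {b b' : β} {c c' : γ}

namespace tripartite

@[simp] lemma not_adj_in₀_in₀ : ¬ (tripartite r₀₁ r₁₂ r₂₀).Adj (in₀ a) (in₀ a') := id
@[simp] lemma not_adj_in₁_in₁ : ¬ (tripartite r₀₁ r₁₂ r₂₀).Adj (in₁ b) (in₁ b') := id
@[simp] lemma not_adj_in₂_in₂ : ¬ (tripartite r₀₁ r₁₂ r₂₀).Adj (in₂ c) (in₂ c') := id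
@[simp] lemma adj_in₀_in₁ : (tripartite r₀₁ r₁₂ r₂₀).Adj (in₀ a) (in₁ b) ↔ r₀₁ a b := .rfl
@[simp] lemma adj_in₁_in₀ : (tripartite r₀₁ r₁₂ r₂₀).Adj (in₁ b) (in₀ a) ↔ r₀₁ a b := .rfl
@[simp] lemma adj_in₁_in₂ : (tripartite r₀₁ r₁₂ r₂₀).Adj (in₁ b) (in₂ c) ↔ r₁₂ b c := .rfl
@[simp] lemma adj_in₂_in₁ : (tripartite r₀₁ r₁₂ r₂₀).Adj (in₂ c) (in₁ b) ↔ r₁₂ b c := .rfl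
@[simp] lemma adj_in₂_in₀ : (tripartite r₀₁ r₁₂ r₂₀).Adj (in₂ c) (in₀ a) ↔ r₂₀ c a := .rfl
@[simp] lemma adj_in₀_in₂ : (tripartite r₀₁ r₁₂ r₂₀).Adj (in₀ a) (in₂ c) ↔ r₂₀ c a := .rfl

instance [DecidableRel r₀₁] [DecidableRel r₁₂] [DecidableRel r₂₀] :
    DecidableRel (tripartite r₀₁ r₁₂ r₂₀).Adj
  | in₀ a, in₁ b | in₁ b, in₀ a => inferInstanceAs (Decidable (r₀₁ a b))
  | in₁ b, in₂ c | in₂ c, in₁ b => inferInstanceAs (Decidable (r₁₂ b c))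
  | in₂ c, in₀ a | in₀ a, in₂ c => inferInstanceAs (Decidable (r₂₀ c a))
  | in₀ _, in₀ _ | in₁ _, in₁ _ | in₂ _, in₂ _ => isFalse id

end tripartite

section Triangles
variable [Fintype α] [Fintype β] [Fintype γ] [DecidableRel r₀₁] [DecidableRel r₁₂]
  [DecidableRel r₂₀]

variable (r₀₁ r₁₂ r₂₀) in
def tripartiteTriangles : Finset (α × β × γ) :=
  {x | r₀₁ x.1 x.2.1 ∧ r₁₂ x.2.1 x.2.2 ∧ r₂₀ x.2.2 x.1}

open TripartiteFromTriangles in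
lemma cliqueFinset_tripartite [DecidableEq α] [DecidableEq β] [DecidableEq γ] :
    (tripartite r₀₁ r₁₂ r₂₀).cliqueFinset 3 = (tripartiteTriangles r₀₁ r₁₂ r₂₀).map toTriangle := by
  ext s
  simp only [mem_cliqueFinset_iff, mem_map, tripartiteTriangles, mem_filter, mem_univ, true_and,
    toTriangle_apply]
  constructor
  · rw [is3Clique_iff]
    rintro ⟨x, y, z, hxy, hxz, hyz, rfl⟩
    rcases x with a | b | c <;> rcases y with a' | b' | c' <;> rcases z with a'' | b'' | c'' <;>
      simp only [tripartite.not_adj_in₀_in₀, tripartite.not_adj_in₁_in₁,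
        tripartite.not_adj_in₂_in₂, tripartite.adj_in₀_in₁, tripartite.adj_in₁_in₀,
        tripartite.adj_in₁_in₂, tripartite.adj_in₂_in₁, tripartite.adj_in₂_in₀,
        tripartite.adj_in₀_in₂] at hxy hxz hyz <;>
      exact ⟨(_, _, _), ⟨‹_›, ‹_›, ‹_›⟩, by
        ext; simp only [mem_insert, mem_singleton, in₀, in₁, in₂, or_assoc, or_comm, or_left_comm]⟩
  · rintro ⟨⟨a, b, c⟩, habc, rfl⟩
    simpa [is3Clique_triple_iff, and_comm, and_left_comm] using habc

lemma card_cliqueFinset_tripartite [DecidableEq α] [DecidableEq β] [DecidableEq γ] :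
    #((tripartite r₀₁ r₁₂ r₂₀).cliqueFinset 3) = #(tripartiteTriangles r₀₁ r₁₂ r₂₀) := by
  rw [cliqueFinset_tripartite, card_map]

variable (r₀₁ r₁₂ r₂₀ X Y Z) in
abbrev tripartiteBlowUp : SimpleGraph ((α × X) ⊕ (β × Y) ⊕ (γ × Z)) :=
  tripartite (fun p q => r₀₁ p.1 q.1) (fun q r => r₁₂ q.1 r.1) (fun r p => r₂₀ r.1 p.1)

lemma card_cliqueFinset_tripartiteBlowUp [DecidableEq α] [DecidableEq β] [DecidableEq γ]
    [Fintype X] [Fintype Y] [Fintype Z] [DecidableEq X] [DecidableEq Y] [DecidableEq Z] :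
    #((tripartiteBlowUp X Y Z r₀₁ r₁₂ r₂₀).cliqueFinset 3) =
      #(tripartiteTriangles r₀₁ r₁₂ r₂₀) * (Fintype.card X * Fintype.card Y * Fintype.card Z) := by
  refine card_cliqueFinset_tripartite.trans ?_
  rw [mul_assoc, ← Fintype.card_prod, ← Fintype.card_prod, ← card_univ, ← card_product]
  refine card_nbij' (fun x => ((x.1.1, x.2.1.1, x.2.2.1), (x.1.2, x.2.1.2, x.2.2.2)))
    (fun y => ((y.1.1, y.2.1), (y.1.2.1, y.2.2.1), (y.1.2.2, y.2.2.2))) ?_ ?_ ?_ ?_ <;>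
    simp [Set.MapsTo, Set.LeftInvOn, tripartiteTriangles]

end Triangles

section Copies
variable [Fintype X] [Fintype Y] (G : SimpleGraph V) [DecidableRel G.Adj]
  (i : α × X → V) (j : β × Y → V)

def missingCopies (a : α) (b : β) : Finset (X × Y) :=
  {uv | ¬ G.Adj (i (a, uv.1)) (j (b, uv.2))}

def robustPairs [Fintype α] [Fintype β] : Finset (α × β) :=
  {e | 3 * #(missingCopies G i j e.1 e.2) < Fintype.card X * Fintype.card Y}

variable {G i j}

lemma sum_card_missingCopies_le [Fintype V] [DecidableEq V] {H : SimpleGraph V}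
    [DecidableRel H.Adj] (hi : Injective i) (hj : Injective j) (hij : ∀ p q, i p ≠ j q)
    {E : Finset (α × β)} (hE : ∀ e ∈ E, ∀ u v, H.Adj (i (e.1, u)) (j (e.2, v))) :
    ∑ e ∈ E, #(missingCopies G i j e.1 e.2) ≤ #(H.edgeFinset \ G.edgeFinset) := by
  rw [← card_sigma]
  refine card_le_card_of_injOn (fun x => s(i (x.1.1, x.2.1), j (x.1.2, x.2.2))) ?_ ?_
  · rintro ⟨e, u, v⟩ hx
    simp only [coe_sigma, Set.mem_sigma_iff, mem_coe, missingCopies, mem_filter, mem_univ,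
      true_and] at hx
    simpa using ⟨hE e hx.1 u v, hx.2⟩
  · rintro ⟨⟨a, b⟩, u, v⟩ - ⟨⟨a', b'⟩, u', v'⟩ - h
    simp only [Sym2.eq_iff, hi.eq_iff, hj.eq_iff, Prod.mk.injEq, hij, (hij _ _).symm,
      and_false, or_false] at h
    obtain ⟨⟨rfl, rfl⟩, rfl, rfl⟩ := h
    rfl

lemma card_sdiff_robustPairs_mul_le [Fintype α] [Fintype β] [DecidableEq α] [DecidableEq β]
    [Fintype V] [DecidableEq V]
    {H : SimpleGraph V} [DecidableRel H.Adj] (hi : Injective i) (hj : Injective j)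
    (hij : ∀ p q, i p ≠ j q) {E : Finset (α × β)}
    (hE : ∀ e ∈ E, ∀ u v, H.Adj (i (e.1, u)) (j (e.2, v))) :
    #(E \ robustPairs G i j) * (Fintype.card X * Fintype.card Y) ≤
      3 * #(H.edgeFinset \ G.edgeFinset) := by
  have : E \ robustPairs G i j =
      {e ∈ E | Fintype.card X * Fintype.card Y ≤ 3 * #(missingCopies G i j e.1 e.2)} := by
    ext; simp [robustPairs]
  rw [this]
  exact (card_filter_le_mul_sum _ _ _ _).trans
    (Nat.mul_le_mul_left 3 (sum_card_missingCopies_le hi hj hij hE))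

lemma card_sdiff_robustPairs_le [Fintype α] [Fintype β] [DecidableEq α] [DecidableEq β]
    [Nonempty X] [Nonempty Y] [Fintype V] [DecidableEq V] {H : SimpleGraph V}
    [DecidableRel H.Adj] (hGH : G ≤ H) (hi : Injective i) (hj : Injective j)
    (hij : ∀ p q, i p ≠ j q) {E : Finset (α × β)}
    (hE : ∀ e ∈ E, ∀ u v, H.Adj (i (e.1, u)) (j (e.2, v))) {η : ℝ}
    (hη : (#H.edgeFinset - #G.edgeFinset : ℝ) ≤ η / 3 * (Fintype.card X * Fintype.card Y)) :
    (#(E \ robustPairs G i j) : ℝ) ≤ η := by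
  have hk : (0 : ℝ) < Fintype.card X * Fintype.card Y := by positivity
  have hsub := edgeFinset_mono hGH
  refine le_of_mul_le_mul_right ?_ hk
  calc (#(E \ robustPairs G i j) : ℝ) * (Fintype.card X * Fintype.card Y)
      ≤ 3 * #(H.edgeFinset \ G.edgeFinset) := by
        exact_mod_cast card_sdiff_robustPairs_mul_le hi hj hij hE
    _ = 3 * (#H.edgeFinset - #G.edgeFinset) := by
        rw [card_sdiff_of_subset hsub, Nat.cast_sub (card_le_card hsub)]
    _ ≤ η * (Fintype.card X * Fintype.card Y) := by linarith

end Copies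

lemma not_robustPairs_triangle [Fintype α] [Fintype β] [Fintype γ] [Fintype X] [Fintype Y]
    [Fintype Z] {G : SimpleGraph ((α × X) ⊕ (β × Y) ⊕ (γ × Z))} [DecidableRel G.Adj]
    (hG : G.CliqueFree 3) (a : α) (b : β) (c : γ) :
    ¬ ((a, b) ∈ robustPairs G in₀ in₁ ∧ (b, c) ∈ robustPairs G in₁ in₂ ∧
      (c, a) ∈ robustPairs G in₂ in₀) := by
  rintro ⟨hab, hbc, hca⟩
  simp only [robustPairs, mem_filter, mem_univ, true_and] at hab hbc hca
  obtain ⟨u, v, w, huv, hvw, hwu⟩ := exists_triple_not_mem_of_three_mul_card_lt _ _ _ hab hbc hca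
  simp only [missingCopies, mem_filter, mem_univ, true_and, not_not] at huv hvw hwu
  classical
  exact hG {in₀ (a, u), in₁ (b, v), in₂ (c, w)} (is3Clique_triple_iff.2 ⟨huv, hwu.symm, hvw⟩)

variable (r₀₁ r₁₂ r₂₀) in
theorem triangle_removal_tripartiteBlowUp [Fintype α] [Fintype β] [Fintype γ] [Nonempty α]
    [Nonempty β] [Nonempty γ] [DecidableEq α] [DecidableEq β] [DecidableEq γ] [DecidableRel r₀₁]
    [DecidableRel r₁₂] [DecidableRel r₂₀] {η : ℝ} (hη : 0 < η)
    (hT : (#(tripartiteTriangles r₀₁ r₁₂ r₂₀) : ℝ) ≤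
      triangleRemovalBound η * Fintype.card α * Fintype.card β * Fintype.card γ) :
    ∃ G ≤ tripartiteBlowUp (β × γ) (γ × α) (α × β) r₀₁ r₁₂ r₂₀, ∃ _ : DecidableRel G.Adj,
      G.CliqueFree 3 ∧
      (#(tripartiteBlowUp (β × γ) (γ × α) (α × β) r₀₁ r₁₂ r₂₀).edgeFinset - #G.edgeFinset : ℝ) <
        9 * η * (Fintype.card α * Fintype.card β * Fintype.card γ) ^ 2 := by
  have hδ : 0 < triangleRemovalBound η := triangleRemovalBound_pos hη
  have hN : (0 : ℝ) < Fintype.card α * Fintype.card β * Fintype.card γ := by positivity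
  obtain ⟨G, hGH, _, hG, hfree⟩ := triangle_removal (ε := η)
    (G := tripartiteBlowUp (β × γ) (γ × α) (α × β) r₀₁ r₁₂ r₂₀) (by
      rw [card_cliqueFinset_tripartiteBlowUp]
      simp only [Fintype.card_sum, Fintype.card_prod]
      push_cast
      nlinarith [mul_le_mul_of_nonneg_right hT (pow_pos hN 2).le, mul_pos hδ (pow_pos hN 3)])
  refine ⟨G, hGH, inferInstance, hfree, hG.trans_eq ?_⟩
  simp only [Fintype.card_sum, Fintype.card_prod]
  push_cast
  ring

end SimpleGraph

open scoped Classical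
open SimpleGraph

/-- **Triangle removal lemma, tripartite graph version.**
For every `ε > 0` there is a `δ > 0` such that any tripartite graph on finite nonempty
vertex sets `V1, V2, V3` with at most `δ|V1||V2||V3|` triangles can be approximated by a
triangle-free tripartite graph, removing/changing at most `ε|Vi||Vj|` edges in each class. -/
theorem triangle_removal_tripartite :
    ∀ ε : ℝ, 0 < ε → ∃ δ : ℝ, 0 < δ ∧
      ∀ (V1 V2 V3 : Type) [Fintype V1] [Fintype V2] [Fintype V3]
        [Nonempty V1] [Nonempty V2] [Nonempty V3]
        (E12 : Finset (V1 × V2)) (E23 : Finset (V2 × V3)) (E31 : Finset (V3 × V1)),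
        ((Finset.univ.filter (fun p : V1 × V2 × V3 =>
            (p.1, p.2.1) ∈ E12 ∧ (p.2.1, p.2.2) ∈ E23 ∧ (p.2.2, p.1) ∈ E31)).card : ℝ)
            ≤ δ * Fintype.card V1 * Fintype.card V2 * Fintype.card V3 →
        ∃ (E'12 : Finset (V1 × V2)) (E'23 : Finset (V2 × V3)) (E'31 : Finset (V3 × V1)),
          (∀ (x1 : V1) (x2 : V2) (x3 : V3),
            ¬ ((x1, x2) ∈ E'12 ∧ (x2, x3) ∈ E'23 ∧ (x3, x1) ∈ E'31)) ∧
          ((E12 \ E'12).card : ℝ) ≤ ε * Fintype.card V1 * Fintype.card V2 ∧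
          ((E23 \ E'23).card : ℝ) ≤ ε * Fintype.card V2 * Fintype.card V3 ∧
          ((E31 \ E'31).card : ℝ) ≤ ε * Fintype.card V3 * Fintype.card V1 := by
  intro ε hε
  refine ⟨triangleRemovalBound (ε / 27), triangleRemovalBound_pos (by positivity), ?_⟩
  intro V1 V2 V3 _ _ _ _ _ _ E12 E23 E31 hT
  obtain ⟨G, hGH, _, hfree, hG⟩ := triangle_removal_tripartiteBlowUp (fun a b => (a, b) ∈ E12)
    (fun b c => (b, c) ∈ E23) (fun c a => (c, a) ∈ E31) (by positivity) hT
  refine ⟨robustPairs G in₀ in₁, robustPairs G in₁ in₂, robustPairs G in₂ in₀,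
    not_robustPairs_triangle hfree, ?_, ?_, ?_⟩
  all_goals
    refine card_sdiff_robustPairs_le hGH (by simp [Injective]) (by simp [Injective]) (by simp)
      (fun _ he _ _ => he) (hG.le.trans_eq ?_)
    push_cast [Fintype.card_prod]
    ring
end

section
/- (Large discrepancy implies energy increment.) Let V = (J, (V_j)_{j∈J}, d, H_d) be a hypergraph system, let e ⊆ J, let E_e ∈ A_e, and for each f ∈ ∂e let B_f ⊆ A_f be a σ-algebra. Suppose Δ_e(E_e | ∨_{f∈∂e} B_f) ≥ ε for some ε > 0. Then for each f ∈ ∂e there exists a σ-algebra B'_f with B_f ⊆ B'_f ⊆ A_f such that complex(B'_f) ≤ complex(B_f) + 1 and ℰ_{E_e}(∨_{f∈∂e} B'_f) ≥ ℰ_{E_e}(∨_{f∈∂e} B_f) + ε². -/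
open scoped Classical BigOperators MeasureTheory

noncomputable section

/-- Average of a real-valued function over a finite type. -/
def avg {α : Type*} [Fintype α] (f : α → ℝ) : ℝ :=
  (∑ x, f x) / (Fintype.card α)

/-- Real-valued indicator function of a set. -/
def ind {α : Type*} (E : Set α) (x : α) : ℝ := if x ∈ E then 1 else 0

/-- Average of `f` over the set `A`. -/
def avgOn {α : Type*} [Fintype α] (A : Set α) (f : α → ℝ) : ℝ :=
  (∑ x ∈ Finset.univ.filter (· ∈ A), f x) / ((Finset.univ.filter (· ∈ A)).card)

/-- The smallest set of the σ-algebra `m` containing `x`. -/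
def atomAt {α : Type*} (m : MeasurableSpace α) (x : α) : Set α :=
  ⋂₀ {s | MeasurableSet[m] s ∧ x ∈ s}

/-- Conditional expectation: the average of `f` over the smallest `m`-set containing `x`. -/
def cexp {α : Type*} [Fintype α] (m : MeasurableSpace α) (f : α → ℝ) (x : α) : ℝ :=
  avgOn (atomAt m x) f

/-- The `E`-energy of a σ-algebra. -/
def energy {α : Type*} [Fintype α] (E : Set α) (m : MeasurableSpace α) : ℝ :=
  avg (fun x => (cexp m (ind E) x) ^ 2)

/-- Complexity: the least number of sets needed to generate `m` as a σ-algebra. -/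
def complexity {α : Type*} (m : MeasurableSpace α) : ℕ :=
  sInf {n | ∃ S : Finset (Set α), S.card = n ∧ MeasurableSpace.generateFrom (↑S : Set (Set α)) = m}

/-- The σ-algebra `A_e` of sets depending only on the coordinates indexed by `e`. -/
def cylAlg {J : Type*} (V : J → Type*) (e : Finset J) : MeasurableSpace (∀ j, V j) :=
  MeasurableSpace.comap (fun x (j : e) => x j.1) ⊤

/-- The skeleton `∂e = {f ⊊ e : |f| = |e| - 1}`. -/
def skel {J : Type*} (e : Finset J) : Finset (Finset J) :=
  e.image (fun j => e.erase j)

/-- The boundary `∂H` of a hypergraph. -/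
def hbd {J : Type*} (H : Finset (Finset J)) : Finset (Finset J) :=
  H.biUnion skel

/-- The `e`-discrepancy of `E` relative to the σ-algebra `m`. -/
def disc {J : Type*} [Fintype J] (V : J → Type*) [∀ j, Fintype (V j)]
    (e : Finset J) (E : Set (∀ j, V j)) (m : MeasurableSpace (∀ j, V j)) : ℝ :=
  sSup { r | ∃ Ef : Finset J → Set (∀ j, V j),
    (∀ f ∈ skel e, MeasurableSet[cylAlg V f] (Ef f)) ∧
    r = |avg (fun x => (ind E x - cexp m (ind E) x) * ∏ f ∈ skel e, ind (Ef f) x)| }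

/-- A growth function: increasing on positives and at least `1 + x`. -/
def IsGrowth (F : ℝ → ℝ) : Prop :=
  (∀ x y, 0 < x → x < y → F x < F y) ∧ ∀ x, 0 < x → 1 + x ≤ F x

/-- An atom of a σ-algebra on a finite set: a minimal non-empty measurable set. -/
def IsAtomOf {α : Type*} (m : MeasurableSpace α) (A : Set α) : Prop :=
  MeasurableSet[m] A ∧ A.Nonempty ∧ ∀ s, MeasurableSet[m] s → s ⊆ A → s = ∅ ∨ s = A

end

/-!
Choose sets `E_f ∈ A_f` attaining the discrepancy (there are finitely many candidates) and
refine each `B_f` by the single set `E_f`; this adds at most one generator. The product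
`P = ∏ 1_{E_f}` is then measurable for the refined join `B'`, so `1_E - E(1_E|B')` is orthogonal
to `P` and the discrepancy is the correlation of `E(1_E|B') - E(1_E|B)` with `P`. As `0 ≤ P ≤ 1`,
Cauchy–Schwarz bounds its square by `‖E(1_E|B') - E(1_E|B)‖²`, which by Pythagoras is the
energy increment.
-/

open MeasurableSpace

section Atoms

variable {α : Type*} {m : MeasurableSpace α}

lemma mem_atomAt_self (m : MeasurableSpace α) (x : α) : x ∈ atomAt m x :=
  Set.mem_sInter.mpr fun _ hs => hs.2

lemma atomAt_subset {x : α} {s : Set α} (hs : MeasurableSet[m] s) (hx : x ∈ s) :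
    atomAt m x ⊆ s :=
  Set.sInter_subset_of_mem ⟨hs, hx⟩

lemma Measurable.eq_of_mem_atomAt {β : Type*} [MeasurableSpace β] [MeasurableSingletonClass β]
    {w : α → β} (hw : Measurable[m] w) {x y : α} (hy : y ∈ atomAt m x) : w y = w x :=
  atomAt_subset (hw (measurableSet_singleton (w x))) rfl hy

variable [Finite α]

lemma measurableSet_atomAt (m : MeasurableSpace α) (x : α) : MeasurableSet[m] (atomAt m x) :=
  MeasurableSet.sInter (Set.to_countable _) fun _ hs => hs.1

lemma atomAt_eq_of_mem {x y : α} (h : y ∈ atomAt m x) : atomAt m y = atomAt m x := by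
  have hx : x ∈ atomAt m y := Set.mem_sInter.mpr fun s hs => by
    by_contra hxs
    exact atomAt_subset hs.1.compl hxs h hs.2
  exact (atomAt_subset (measurableSet_atomAt m x) h).antisymm
    (atomAt_subset (measurableSet_atomAt m y) hx)

lemma mem_atomAt_comm {x y : α} : y ∈ atomAt m x ↔ x ∈ atomAt m y :=
  ⟨fun h => atomAt_eq_of_mem h ▸ mem_atomAt_self m x,
    fun h => atomAt_eq_of_mem h ▸ mem_atomAt_self m y⟩

/-- On a finite type every preimage is a finite union of atoms. -/
lemma measurable_of_eq_of_mem_atomAt {β : Type*} [MeasurableSpace β] {w : α → β}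
    (hw : ∀ x y, y ∈ atomAt m x → w y = w x) : Measurable[m] w := by
  intro t _
  have hunion : w ⁻¹' t = ⋃ x ∈ w ⁻¹' t, atomAt m x :=
    Set.Subset.antisymm (fun x hx => Set.mem_biUnion hx (mem_atomAt_self m x))
      (Set.iUnion₂_subset fun x hx y hy => by rwa [Set.mem_preimage, hw x y hy])
  rw [hunion]
  exact MeasurableSet.biUnion (Set.to_countable _) fun x _ => measurableSet_atomAt m x

end Atoms

lemma measurable_ind {α : Type*} {m : MeasurableSpace α} {s : Set α}
    (hs : MeasurableSet[m] s) : Measurable[m] (ind s) :=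
  Measurable.ite hs measurable_const measurable_const

section ConditionalExpectation

variable {α : Type*} [Fintype α] {m m' : MeasurableSpace α}

lemma measurable_cexp (m : MeasurableSpace α) (f : α → ℝ) : Measurable[m] (cexp m f) :=
  measurable_of_eq_of_mem_atomAt fun _ _ hy => by unfold cexp; rw [atomAt_eq_of_mem hy]

lemma cexp_mul_of_measurable (f : α → ℝ) {w : α → ℝ} (hw : Measurable[m] w) (x : α) :
    cexp m (fun y => f y * w y) x = cexp m f x * w x := by
  unfold cexp avgOn
  rw [div_mul_eq_mul_div, Finset.sum_mul]
  congr 1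
  exact Finset.sum_congr rfl fun y hy => by
    beta_reduce
    rw [hw.eq_of_mem_atomAt (Finset.mem_filter.mp hy).2]

lemma sum_cexp (m : MeasurableSpace α) (f : α → ℝ) : ∑ x, cexp m f x = ∑ x, f x := by
  let c : α → ℝ := fun x => ((Finset.univ.filter (· ∈ atomAt m x)).card : ℝ)
  have hc : ∀ y, c y ≠ 0 := fun y => Nat.cast_ne_zero.mpr <|
    Finset.card_ne_zero_of_mem (Finset.mem_filter.mpr ⟨Finset.mem_univ y, mem_atomAt_self m y⟩)
  calc ∑ x, cexp m f x
      = ∑ x, ∑ y, if y ∈ atomAt m x then f y / c x else 0 := by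
        refine Finset.sum_congr rfl fun x _ => ?_
        rw [← Finset.sum_filter, cexp, avgOn, Finset.sum_div]
    _ = ∑ y, ∑ x, if x ∈ atomAt m y then f y / c y else 0 := by
        rw [Finset.sum_comm]
        refine Finset.sum_congr rfl fun y _ => Finset.sum_congr rfl fun x _ => ?_
        by_cases hx : x ∈ atomAt m y
        · rw [if_pos (mem_atomAt_comm.mp hx), if_pos hx]
          simp only [c, atomAt_eq_of_mem hx]
        · rw [if_neg (mt mem_atomAt_comm.mp hx), if_neg hx]
    _ = ∑ y, f y := by
        refine Finset.sum_congr rfl fun y _ => ?_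
        rw [← Finset.sum_filter, Finset.sum_const, nsmul_eq_mul]
        field_simp [hc y]
        exact mul_comm _ _

lemma avg_cexp_mul (f : α → ℝ) {w : α → ℝ} (hw : Measurable[m] w) :
    avg (fun x => cexp m f x * w x) = avg (fun x => f x * w x) := by
  simp only [avg, ← cexp_mul_of_measurable f hw, sum_cexp]

lemma avg_sub (u v : α → ℝ) : avg (fun x => u x - v x) = avg u - avg v := by
  simp only [avg, Finset.sum_sub_distrib, sub_div]

lemma avg_le_avg {u v : α → ℝ} (h : ∀ x, u x ≤ v x) : avg u ≤ avg v :=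
  div_le_div_of_nonneg_right (Finset.sum_le_sum fun x _ => h x) (Nat.cast_nonneg _)

lemma sq_avg_le_avg_sq (u : α → ℝ) : avg u ^ 2 ≤ avg (fun x => u x ^ 2) := by
  set N : ℝ := (Fintype.card α : ℝ)
  have hCS : (∑ x, u x) ^ 2 ≤ N * ∑ x, u x ^ 2 := by
    simpa [N] using sq_sum_le_card_mul_sum_sq (s := Finset.univ) (f := u)
  rcases eq_or_ne N 0 with hN | hN
  · simp [avg, N, hN]
  calc avg u ^ 2 = (∑ x, u x) ^ 2 / N ^ 2 := div_pow _ _ _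
    _ ≤ N * (∑ x, u x ^ 2) / N ^ 2 := by gcongr
    _ = avg (fun x => u x ^ 2) := by rw [sq, mul_div_mul_left _ _ hN]; rfl

/-- Pythagoras: `E(f|m)` is orthogonal to `E(f|m') - E(f|m)` when `m ≤ m'`. -/
lemma avg_sq_cexp_of_le (h : m ≤ m') (f : α → ℝ) :
    avg (fun x => cexp m' f x ^ 2) =
      avg (fun x => cexp m f x ^ 2) + avg (fun x => (cexp m' f x - cexp m f x) ^ 2) := by
  have horth := avg_cexp_mul (m := m') f ((measurable_cexp m f).mono h le_rfl)
  rw [← avg_cexp_mul f (measurable_cexp m f)] at horth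
  have hexp : avg (fun x => (cexp m' f x - cexp m f x) ^ 2) =
      avg (fun x => cexp m' f x ^ 2) - 2 * avg (fun x => cexp m' f x * cexp m f x) +
        avg (fun x => cexp m f x ^ 2) := by
    simp only [avg, Finset.mul_sum, ← Finset.sum_sub_distrib, ← Finset.sum_add_distrib,
      ← add_div, ← sub_div, mul_div_assoc']
    congr 1
    exact Finset.sum_congr rfl fun x _ => by ring
  have hsq : avg (fun x => cexp m f x * cexp m f x) = avg (fun x => cexp m f x ^ 2) := by
    simp only [sq]
  linarith

lemma energy_eq_add_of_le (E : Set α) (h : m ≤ m') :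
    energy E m' = energy E m + avg (fun x => (cexp m' (ind E) x - cexp m (ind E) x) ^ 2) :=
  avg_sq_cexp_of_le h (ind E)

/-- `f - E(f|m')` is orthogonal to `P`, so `f` may be replaced by `E(f|m')`; then
Cauchy–Schwarz. -/
lemma sq_avg_sub_cexp_mul_le (f : α → ℝ) {P : α → ℝ} (hP : Measurable[m'] P)
    (hP1 : ∀ x, |P x| ≤ 1) :
    avg (fun x => (f x - cexp m f x) * P x) ^ 2 ≤
      avg (fun x => (cexp m' f x - cexp m f x) ^ 2) := by
  have hswap : avg (fun x => (f x - cexp m f x) * P x) =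
      avg (fun x => (cexp m' f x - cexp m f x) * P x) := by
    simp only [sub_mul, avg_sub (fun x => f x * P x), avg_sub (fun x => cexp m' f x * P x),
      avg_cexp_mul f hP]
  rw [hswap]
  refine (sq_avg_le_avg_sq _).trans (avg_le_avg fun x => ?_)
  rw [mul_pow]
  have hP2 : P x ^ 2 ≤ 1 := by rw [← sq_abs]; exact pow_le_one₀ (abs_nonneg _) (hP1 x)
  exact mul_le_of_le_one_right (sq_nonneg _) hP2

end ConditionalExpectation

lemma abs_prod_ind_le_one {α ι : Type*} (s : Finset ι) (E : ι → Set α) (x : α) :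
    |∏ i ∈ s, ind (E i) x| ≤ 1 := by
  rw [Finset.abs_prod]
  exact Finset.prod_le_one (fun _ _ => abs_nonneg _) fun i _ => by unfold ind; split <;> simp

lemma exists_finset_card_eq_complexity {α : Type*} [Finite α] (m : MeasurableSpace α) :
    ∃ S : Finset (Set α), S.card = complexity m ∧ generateFrom (↑S : Set (Set α)) = m :=
  Nat.sInf_mem (s := {n | ∃ S : Finset (Set α), S.card = n ∧ generateFrom ↑S = m})
    ⟨_, (Set.toFinite {s | MeasurableSet[m] s}).toFinset, rfl, by
      rw [Set.Finite.coe_toFinset, generateFrom_measurableSet]⟩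

lemma complexity_sup_generateFrom_singleton_le {α : Type*} [Finite α] (m : MeasurableSpace α)
    (s : Set α) : complexity (m ⊔ generateFrom {s}) ≤ complexity m + 1 := by
  obtain ⟨S, hcard, hgen⟩ := exists_finset_card_eq_complexity m
  have hgen' : generateFrom (↑(insert s S) : Set (Set α)) = m ⊔ generateFrom {s} := by
    rw [Finset.coe_insert, Set.insert_eq, ← generateFrom_sup_generateFrom, hgen, sup_comm]
  calc complexity (m ⊔ generateFrom {s})
      ≤ (insert s S).card := Nat.sInf_le ⟨insert s S, rfl, hgen'⟩
    _ ≤ complexity m + 1 := hcard ▸ Finset.card_insert_le s S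

lemma exists_eq_disc {J : Type*} [Fintype J] (V : J → Type*) [∀ j, Fintype (V j)]
    (e : Finset J) (E : Set (∀ j, V j)) (m : MeasurableSpace (∀ j, V j)) :
    ∃ Ef : Finset J → Set (∀ j, V j), (∀ f ∈ skel e, MeasurableSet[cylAlg V f] (Ef f)) ∧
      disc V e E m =
        |avg (fun x => (ind E x - cexp m (ind E) x) * ∏ f ∈ skel e, ind (Ef f) x)| := by
  let S : Set ℝ := {r | ∃ Ef : Finset J → Set (∀ j, V j),
    (∀ f ∈ skel e, MeasurableSet[cylAlg V f] (Ef f)) ∧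
    r = |avg (fun x => (ind E x - cexp m (ind E) x) * ∏ f ∈ skel e, ind (Ef f) x)|}
  have hS : S.Nonempty := ⟨_, fun _ => Set.univ, fun _ _ => MeasurableSet.univ, rfl⟩
  exact hS.csSup_mem ((Set.finite_range _).subset fun _ ⟨Ef, _, hr⟩ => ⟨Ef, hr.symm⟩)

theorem large_discrepancy_energy_increment_general
    {J : Type} [Fintype J] (V : J → Type) [∀ j, Fintype (V j)]
    (e : Finset J) (E : Set (∀ j, V j))
    (B : Finset J → MeasurableSpace (∀ j, V j))
    (hB : ∀ f ∈ skel e, B f ≤ cylAlg V f)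
    (ε : ℝ) (hε : 0 < ε)
    (hdisc : ε ≤ disc V e E (⨆ f ∈ skel e, B f)) :
    ∃ B' : Finset J → MeasurableSpace (∀ j, V j),
      (∀ f ∈ skel e, B f ≤ B' f ∧ B' f ≤ cylAlg V f ∧
        complexity (B' f) ≤ complexity (B f) + 1) ∧
      energy E (⨆ f ∈ skel e, B f) + ε ^ 2 ≤ energy E (⨆ f ∈ skel e, B' f) := by
  obtain ⟨Ef, hEf, hdisc_eq⟩ := exists_eq_disc V e E (⨆ f ∈ skel e, B f)
  set B' := fun f => B f ⊔ generateFrom {Ef f}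
  refine ⟨B', fun f hf => ⟨le_sup_left, sup_le (hB f hf) (generateFrom_le ?_),
    complexity_sup_generateFrom_singleton_le _ _⟩, ?_⟩
  · rintro _ rfl
    exact hEf f hf
  have hle : ⨆ f ∈ skel e, B f ≤ ⨆ f ∈ skel e, B' f := iSup₂_mono fun _ _ => le_sup_left
  have hEf' : ∀ f ∈ skel e, MeasurableSet[⨆ f ∈ skel e, B' f] (Ef f) := fun f hf =>
    le_iSup₂ (f := fun f _ => B' f) f hf _
      (le_sup_right (a := B f) _ (measurableSet_generateFrom rfl))
  have hP : Measurable[⨆ f ∈ skel e, B' f] fun x => ∏ f ∈ skel e, ind (Ef f) x :=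
    Finset.measurable_prod _ fun f hf => measurable_ind (hEf' f hf)
  rw [energy_eq_add_of_le E hle, add_le_add_iff_left]
  calc ε ^ 2 ≤ disc V e E (⨆ f ∈ skel e, B f) ^ 2 := pow_le_pow_left₀ hε.le hdisc 2
    _ ≤ _ := by
      rw [hdisc_eq, sq_abs]
      exact sq_avg_sub_cexp_mul_le _ hP (abs_prod_ind_le_one _ _)

/-- **Large discrepancy implies energy increment.**
If `E_e ∈ A_e` has `e`-discrepancy at least `ε` with respect to `∨_{f∈∂e} B_f`,
then the σ-algebras `B_f` (`f ∈ ∂e`) can be refined to `B'_f ⊆ A_f`, each of complexity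
at most one more, with the `E_e`-energy of the join increasing by at least `ε²`. -/
theorem large_discrepancy_energy_increment
    {J : Type} [Fintype J] (V : J → Type) [∀ j, Fintype (V j)] [∀ j, Nonempty (V j)]
    (d : ℕ) (hd : 1 ≤ d) (H : Finset (Finset J)) (hH : ∀ e ∈ H, e.card = d)
    (e : Finset J) (E : Set (∀ j, V j)) (hE : MeasurableSet[cylAlg V e] E)
    (B : Finset J → MeasurableSpace (∀ j, V j))
    (hB : ∀ f ∈ skel e, B f ≤ cylAlg V f)
    (ε : ℝ) (hε : 0 < ε)
    (hdisc : ε ≤ disc V e E (⨆ f ∈ skel e, B f)) :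
    ∃ B' : Finset J → MeasurableSpace (∀ j, V j),
      (∀ f ∈ skel e, B f ≤ B' f ∧ B' f ≤ cylAlg V f ∧
        complexity (B' f) ≤ complexity (B f) + 1) ∧
      energy E (⨆ f ∈ skel e, B f) + ε ^ 2 ≤ energy E (⨆ f ∈ skel e, B' f) :=
  large_discrepancy_energy_increment_general V e E B hB ε hε hdisc
end
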